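/- For every n ≥ 2, if M is a countable subset of L that is dense in L with its Euclidean subspace topology, then the space (X, τ(L \ M)) is second-countable but not σ-compact. -/

import Mathlib

open Metric Set TopologicalSpace

noncomputable section

/-- The last coordinate `x (n-1)` of a point of `EuclideanSpace ℝ (Fin n)`
(junk value `0` if `n = 0`). -/
def lastCoord (n : ℕ) (x : EuclideanSpace ℝ (Fin n)) : ℝ :=
  if h : 0 < n then x ⟨n - 1, Nat.sub_lt h one_pos⟩ else 0

/-- The closed upper half-space `X = {x : x (n-1) ≥ 0}`. -/
def HalfSpace (n : ℕ) : Set (EuclideanSpace ℝ (Fin n)) := {x | 0 ≤ lastCoord n x}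

/-- The open upper half-space `P = {x : x (n-1) > 0}`. -/
def OpenHalf (n : ℕ) : Set (EuclideanSpace ℝ (Fin n)) := {x | 0 < lastCoord n x}

/-- The boundary hyperplane `L = {x : x (n-1) = 0}`. -/
def Bdry (n : ℕ) : Set (EuclideanSpace ℝ (Fin n)) := {x | lastCoord n x = 0}

/-- The `n`-th standard basis vector `e` (junk value `0` if `n = 0`). -/
def eVec (n : ℕ) : EuclideanSpace ℝ (Fin n) :=
  if h : 0 < n then EuclideanSpace.single ⟨n - 1, Nat.sub_lt h one_pos⟩ (1 : ℝ) else 0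

/-- The tangent ball `B̃(a, ε) = {a} ∪ B(a + ε • e, ε)`. -/
def tangentBall (n : ℕ) (a : EuclideanSpace ℝ (Fin n)) (ε : ℝ) :
    Set (EuclideanSpace ℝ (Fin n)) :=
  {a} ∪ ball (a + ε • eVec n) ε

/-- The generating family for the topology `τ(A)` on `X`:
balls `B(a,ε)` with `a ∈ P`, `0 < ε < a (n-1)`; traces `B(a,ε) ∩ X` with `a ∈ A`, `ε > 0`;
and tangent balls `B̃(a,ε)` with `a ∈ L \ A`, `ε > 0`. -/
def niemGen (n : ℕ) (A : Set (EuclideanSpace ℝ (Fin n))) : Set (Set (HalfSpace n)) :=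
  {s | ∃ a ∈ OpenHalf n, ∃ ε, 0 < ε ∧ ε < lastCoord n a ∧
      s = Subtype.val ⁻¹' ball a ε} ∪
  {s | ∃ a ∈ A, ∃ ε, 0 < ε ∧ s = Subtype.val ⁻¹' ball a ε} ∪
  {s | ∃ a ∈ Bdry n \ A, ∃ ε, 0 < ε ∧ s = Subtype.val ⁻¹' tangentBall n a ε}

/-- The topology `τ(A)` on `X`; `τ(∅)` is the Niemytzki topology `τ_N`. -/
def tau (n : ℕ) (A : Set (EuclideanSpace ℝ (Fin n))) : TopologicalSpace (HalfSpace n) :=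
  generateFrom (niemGen n A)

/-- The inclusion of `L` into `X`. -/
def inclLX (n : ℕ) (x : Bdry n) : HalfSpace n := ⟨x.1, le_of_eq x.2.symm⟩

/-- The subspace topology `τ(A)|_L` on `L` induced from `(X, τ(A))`. -/
def tauL (n : ℕ) (A : Set (EuclideanSpace ℝ (Fin n))) : TopologicalSpace (Bdry n) :=
  TopologicalSpace.induced (inclLX n) (tau n A)

/-- A space is perfect if every closed set is a `Gδ`-set. -/
def IsPerfectSpace (X : Type*) [TopologicalSpace X] : Prop :=
  ∀ s : Set X, IsClosed s → IsGδ s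

/-- An `Fσ`-set: a countable union of closed sets. -/
def IsFsigma {X : Type*} [TopologicalSpace X] (s : Set X) : Prop :=
  ∃ F : ℕ → Set X, (∀ i, IsClosed (F i)) ∧ s = ⋃ i, F i

/-- Countably paracompact: every countable open cover admits a locally finite open refinement. -/
def CountablyParacompact (X : Type*) [TopologicalSpace X] : Prop :=
  ∀ u : ℕ → Set X, (∀ i, IsOpen (u i)) → (⋃ i, u i) = Set.univ →
    ∃ (ι : Type) (v : ι → Set X), (∀ j, IsOpen (v j)) ∧ (⋃ j, v j) = Set.univ ∧
      LocallyFinite v ∧ ∀ j, ∃ i, v j ⊆ u i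

/-- A zero set: the zero locus of a continuous real-valued function. -/
def IsZeroSet {X : Type*} [TopologicalSpace X] (s : Set X) : Prop :=
  ∃ f : X → ℝ, Continuous f ∧ s = f ⁻¹' {0}

/-- `Y` is z-embedded in `X` if every zero set of the subspace `Y`
is the trace on `Y` of a zero set of `X`. -/
def ZEmbedded {X : Type*} [TopologicalSpace X] (Y : Set X) : Prop :=
  ∀ s : Set Y, IsZeroSet s → ∃ Z : Set X, IsZeroSet Z ∧ s = Subtype.val ⁻¹' Z

/-- `Y` is `C*`-embedded in `X` if every bounded continuous real-valued function on the
subspace `Y` extends to a bounded continuous function on `X`. -/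
def CStarEmbedded {X : Type*} [TopologicalSpace X] (Y : Set X) : Prop :=
  ∀ f : Y → ℝ, Continuous f → (∃ M, ∀ y, |f y| ≤ M) →
    ∃ g : X → ℝ, Continuous g ∧ (∃ M, ∀ x, |g x| ≤ M) ∧ ∀ y : Y, g ↑y = f y
end

/-!
Every Euclidean-open set is `τ(A)`-open, and `τ(A)` is obtained from the Euclidean topology of
`X` by adding the tangent balls at the points of `L \ A`; radii `1 / (k + 1)` suffice, so `τ(A)`
is second countable as soon as `L \ A` is countable (here `L \ A = M`).

A tangent ball at `a ∈ L \ A` meets `L` only in `a`, and the complements of the closed Euclidean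
balls around `a` exhaust `X \ {a}`; hence a `τ(A)`-compact set `K` contains no point of `L`
Euclidean-close to `a` other than `a`. If `X = ⋃ Kₖ` with `Kₖ` compact, the traces `Kₖ ∩ L` are
Euclidean compact and cover `L`, so by Baire one of them has interior in `L`, which contains a
point `a` of the dense set `L \ A`. Since `n ≥ 2`, `a` is not isolated in `L`, a contradiction.
-/

open Topology

section Niemytzki

variable {n : ℕ} {A : Set (EuclideanSpace ℝ (Fin n))}

local notation "E" => EuclideanSpace ℝ (Fin n)

lemma lastCoord_eq (hn : 0 < n) (x : E) :
    lastCoord n x = x ⟨n - 1, Nat.sub_lt hn one_pos⟩ := dif_pos hn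

lemma abs_lastCoord_sub_le (hn : 0 < n) (x y : E) :
    |lastCoord n x - lastCoord n y| ≤ dist x y := by
  rw [lastCoord_eq hn, lastCoord_eq hn, ← Real.dist_eq]
  exact PiLp.dist_apply_le x y _

lemma continuous_lastCoord (hn : 0 < n) : Continuous (lastCoord n) :=
  LipschitzWith.continuous (K := 1) <| LipschitzWith.of_dist_le_mul fun x y => by
    simpa [Real.dist_eq] using abs_lastCoord_sub_le hn x y

lemma isClosed_bdry (hn : 0 < n) : IsClosed (Bdry n) :=
  isClosed_eq (continuous_lastCoord hn) continuous_const

lemma norm_eVec (hn : 0 < n) : ‖eVec n‖ = 1 := by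
  rw [eVec, dif_pos hn, PiLp.norm_single, norm_one]

lemma lastCoord_add_smul_eVec (hn : 0 < n) (a : E) (ε : ℝ) :
    lastCoord n (a + ε • eVec n) = lastCoord n a + ε := by
  simp [lastCoord_eq hn, eVec, hn]

lemma dist_add_smul_eVec (hn : 0 < n) (a : E) (δ ε : ℝ) :
    dist (a + δ • eVec n) (a + ε • eVec n) = |δ - ε| := by
  rw [dist_eq_norm, add_sub_add_left_eq_sub, ← sub_smul, norm_smul, norm_eVec hn, mul_one,
    Real.norm_eq_abs]

lemma dist_add_smul_eVec_self (hn : 0 < n) (a : E) (ε : ℝ) :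
    dist (a + ε • eVec n) a = |ε| := by
  rw [dist_eq_norm, add_sub_cancel_left, norm_smul, norm_eVec hn, mul_one, Real.norm_eq_abs]

lemma exists_mem_bdry_ne_dist_lt (hn : 2 ≤ n) {a : E} (ha : a ∈ Bdry n) {δ : ℝ} (hδ : 0 < δ) :
    ∃ y ∈ Bdry n, y ≠ a ∧ dist y a < δ := by
  have hn0 : 0 < n := by omega
  set v : E := EuclideanSpace.single ⟨0, hn0⟩ (1 : ℝ)
  have hv : lastCoord n v = 0 := by
    rw [lastCoord_eq hn0, PiLp.single_apply, if_neg (by simp [Fin.ext_iff]; omega)]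
  have hdist : dist (a + (δ / 2) • v) a = δ / 2 := by
    rw [dist_eq_norm, add_sub_cancel_left, norm_smul, PiLp.norm_single, norm_one,
      mul_one, Real.norm_of_nonneg (by positivity)]
  refine ⟨a + (δ / 2) • v, ?_, fun h => ?_, by linarith⟩
  · simp only [Bdry, mem_ofPred_eq, lastCoord_eq hn0] at ha hv ⊢
    simp [ha, hv]
  · rw [h, dist_self] at hdist
    linarith

lemma tangentBall_subset_ball (hn : 0 < n) {a : E} {ε r : ℝ} (hε : 0 < ε) (hr : 2 * ε ≤ r) :
    tangentBall n a ε ⊆ ball a r := by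
  rintro y (rfl | hy)
  · exact mem_ball_self (by linarith)
  · rw [mem_ball] at hy ⊢
    calc dist y a ≤ dist y (a + ε • eVec n) + dist (a + ε • eVec n) a := dist_triangle _ _ _
      _ < ε + ε := by rw [dist_add_smul_eVec_self hn, abs_of_pos hε]; linarith
      _ ≤ r := by linarith

lemma tangentBall_mono (hn : 0 < n) (a : E) {δ ε : ℝ} (hδε : δ ≤ ε) :
    tangentBall n a δ ⊆ tangentBall n a ε := by
  rintro y (rfl | hy)
  · exact Or.inl rfl
  · refine Or.inr (mem_ball.2 ?_)
    calc dist y (a + ε • eVec n)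
        ≤ dist y (a + δ • eVec n) + dist (a + δ • eVec n) (a + ε • eVec n) := dist_triangle _ _ _
      _ < δ + (ε - δ) := by
          rw [dist_add_smul_eVec hn, abs_of_nonpos (by linarith)]
          linarith [mem_ball.1 hy]
      _ = ε := by ring

lemma eq_of_mem_tangentBall_of_mem_bdry (hn : 0 < n) {a y : E} {ε : ℝ} (ha : a ∈ Bdry n)
    (hy : y ∈ tangentBall n a ε) (hyL : y ∈ Bdry n) : y = a := by
  rcases hy with rfl | hy
  · rfl
  · have := abs_lastCoord_sub_le hn y (a + ε • eVec n)
    rw [lastCoord_add_smul_eVec hn, ha, hyL, zero_add, zero_sub, abs_neg] at this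
    linarith [le_abs_self ε, mem_ball.1 hy]

lemma isOpen_tau_ball_of_mem_openHalf {a : E} (ha : a ∈ OpenHalf n) {ε : ℝ} (hε : 0 < ε)
    (hεa : ε < lastCoord n a) :
    IsOpen[tau n A] (Subtype.val ⁻¹' ball a ε : Set (HalfSpace n)) :=
  isOpen_generateFrom_of_mem (Or.inl (Or.inl ⟨a, ha, ε, hε, hεa, rfl⟩))

lemma isOpen_tau_ball_of_mem {a : E} (ha : a ∈ A) {ε : ℝ} (hε : 0 < ε) :
    IsOpen[tau n A] (Subtype.val ⁻¹' ball a ε : Set (HalfSpace n)) :=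
  isOpen_generateFrom_of_mem (Or.inl (Or.inr ⟨a, ha, ε, hε, rfl⟩))

lemma isOpen_tau_tangentBall {a : E} (ha : a ∈ Bdry n \ A) {ε : ℝ} (hε : 0 < ε) :
    IsOpen[tau n A] (Subtype.val ⁻¹' tangentBall n a ε : Set (HalfSpace n)) :=
  isOpen_generateFrom_of_mem (Or.inr ⟨a, ha, ε, hε, rfl⟩)

lemma isOpen_tau_preimage_val (hn : 0 < n) {U : Set E} (hU : IsOpen U) :
    IsOpen[tau n A] (Subtype.val ⁻¹' U : Set (HalfSpace n)) := by
  rw [@isOpen_iff_forall_mem_open _ (tau n A)]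
  intro x hx
  obtain ⟨r, hr, hball⟩ := Metric.isOpen_iff.1 hU x.1 hx
  have hx0 : 0 ≤ lastCoord n x.1 := x.2
  rcases hx0.lt_or_eq with hpos | hzero
  · obtain ⟨ε, hε, hεr⟩ := exists_between (lt_min hr hpos)
    exact ⟨_, preimage_mono ((ball_subset_ball (hεr.le.trans (min_le_left _ _))).trans hball),
      isOpen_tau_ball_of_mem_openHalf hpos hε (hεr.trans_le (min_le_right _ _)), mem_ball_self hε⟩
  · by_cases hxA : x.1 ∈ A
    · exact ⟨_, preimage_mono hball, isOpen_tau_ball_of_mem hxA hr, mem_ball_self hr⟩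
    · exact ⟨_,
        preimage_mono ((tangentBall_subset_ball hn (half_pos hr) (by linarith)).trans hball),
        isOpen_tau_tangentBall ⟨hzero.symm, hxA⟩ (half_pos hr), Or.inl rfl⟩

lemma continuous_val_tau (hn : 0 < n) :
    Continuous[tau n A, _] (Subtype.val : HalfSpace n → E) :=
  continuous_def.2 fun _ => isOpen_tau_preimage_val hn

lemma tau_eq_inf_generateFrom_tangentBall (hn : 0 < n) :
    tau n A = instTopologicalSpaceSubtype ⊓ generateFrom (range fun p : ↥(Bdry n \ A) × ℕ =>
      (Subtype.val ⁻¹' tangentBall n p.1 (1 / (p.2 + 1)) : Set (HalfSpace n))) := by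
  refine le_antisymm (le_inf (continuous_iff_le_induced.1 (continuous_val_tau hn))
    (le_generateFrom ?_)) (le_generateFrom ?_)
  · rintro _ ⟨⟨a, k⟩, rfl⟩
    exact isOpen_tau_tangentBall a.2 Nat.one_div_pos_of_nat
  · rintro _ ((⟨a, -, ε, -, -, rfl⟩ | ⟨a, -, ε, -, rfl⟩) | ⟨a, ha, ε, hε, rfl⟩)
    · exact (isOpen_ball.preimage continuous_subtype_val).mono inf_le_left
    · exact (isOpen_ball.preimage continuous_subtype_val).mono inf_le_left
    · obtain ⟨k, hk⟩ := exists_nat_one_div_lt hε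
      have hsplit : tangentBall n a ε = tangentBall n a (1 / (k + 1)) ∪ ball (a + ε • eVec n) ε :=
        subset_antisymm (union_subset_union_left _ (singleton_subset_iff.2 (Or.inl rfl)))
          (union_subset (tangentBall_mono hn a hk.le) subset_union_right)
      rw [hsplit, preimage_union]
      refine @IsOpen.union _ _ _ (_ ⊓ _) ?_ ?_
      · exact (isOpen_generateFrom_of_mem
          (mem_range_self ((⟨a, ha⟩, k) : ↥(Bdry n \ A) × ℕ))).mono inf_le_right
      · exact (isOpen_ball.preimage continuous_subtype_val).mono inf_le_left

lemma secondCountableTopology_inf_generateFrom {α : Type*} [t : TopologicalSpace α]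
    [SecondCountableTopology α] {T : Set (Set α)} (hT : T.Countable) :
    @SecondCountableTopology α (t ⊓ generateFrom T) := by
  rw [eq_generateFrom_countableBasis α, ← generateFrom_union]
  exact SecondCountableTopology.mk' ((countable_countableBasis α).union hT)

theorem secondCountableTopology_tau (hn : 0 < n) (hA : (Bdry n \ A).Countable) :
    @SecondCountableTopology (HalfSpace n) (tau n A) := by
  have := hA.to_subtype
  rw [tau_eq_inf_generateFrom_tangentBall hn]
  exact secondCountableTopology_inf_generateFrom (countable_range _)

lemma exists_pos_forall_mem_bdry_eq_of_isCompact (hn : 0 < n) {K : Set (HalfSpace n)}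
    (hK : @IsCompact _ (tau n A) K) {a : E} (ha : a ∈ Bdry n \ A) :
    ∃ ε > 0, ∀ y ∈ K, (y : E) ∈ Bdry n → dist (y : E) a < ε → (y : E) = a := by
  set V : ℕ → Set (HalfSpace n) := fun m =>
    Subtype.val ⁻¹' tangentBall n a 1 ∪ Subtype.val ⁻¹' (closedBall a (1 / (m + 1)))ᶜ
  have hVopen : ∀ m, IsOpen[tau n A] (V m) := fun m =>
    @IsOpen.union _ _ _ (tau n A) (isOpen_tau_tangentBall ha one_pos)
      (isOpen_tau_preimage_val hn isClosed_closedBall.isOpen_compl)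
  have hVcover : K ⊆ ⋃ m, V m := by
    intro y _
    by_cases hya : (y : E) = a
    · exact mem_iUnion.2 ⟨0, Or.inl (Or.inl hya)⟩
    · obtain ⟨m, hm⟩ := exists_nat_one_div_lt (dist_pos.2 hya)
      exact mem_iUnion.2 ⟨m, Or.inr (not_le.2 hm)⟩
  have hVmono : Monotone V := fun m m' hmm' =>
    union_subset_union_right _ (preimage_mono (compl_subset_compl.2
      (closedBall_subset_closedBall (Nat.one_div_le_one_div hmm'))))
  obtain ⟨N, hN⟩ :=
    @IsCompact.elim_directed_cover _ (tau n A) _ _ _ hK V hVopen hVcover hVmono.directed_le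
  refine ⟨1 / (N + 1), Nat.one_div_pos_of_nat, fun y hy hyL hya => ?_⟩
  rcases hN hy with hyT | hyB
  · exact eq_of_mem_tangentBall_of_mem_bdry hn ha.1 hyT hyL
  · exact absurd (mem_closedBall.2 hya.le) hyB

theorem not_sigmaCompactSpace_tau (hn : 2 ≤ n) (hA : Dense {y : Bdry n | (y : E) ∉ A}) :
    ¬ @SigmaCompactSpace (HalfSpace n) (tau n A) := by
  intro hσ
  have hn0 : 0 < n := by omega
  obtain ⟨K, hK, hKU⟩ := @isSigmaCompact_univ _ (tau n A) hσ
  set F : ℕ → Set (Bdry n) := fun k => {y | (y : E) ∈ Subtype.val '' K k}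
  have hFclosed : ∀ k, IsClosed (F k) := fun k =>
    (@IsCompact.image _ _ (tau n A) _ _ _ (hK k) (continuous_val_tau hn0)).isClosed.preimage
      continuous_subtype_val
  have hFcover : ⋃ k, F k = univ := by
    refine eq_univ_of_forall fun y => ?_
    obtain ⟨k, hk⟩ := mem_iUnion.1 (hKU.symm ▸ mem_univ (⟨y, y.2.symm.le⟩ : HalfSpace n))
    exact mem_iUnion.2 ⟨k, _, hk, rfl⟩
  have : CompleteSpace (Bdry n) := (isClosed_bdry hn0).completeSpace_coe
  have : Nonempty (Bdry n) := ⟨⟨0, by simp [Bdry, lastCoord]⟩⟩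
  obtain ⟨k, y₀, hy₀⟩ := nonempty_interior_of_iUnion_of_closed hFclosed hFcover
  obtain ⟨a, haA, haF⟩ := hA.exists_mem_open isOpen_interior ⟨y₀, hy₀⟩
  obtain ⟨r, hr, hrF⟩ := Metric.mem_nhds_iff.1 (mem_interior_iff_mem_nhds.1 haF)
  obtain ⟨ε, hε, hKa⟩ :=
    exists_pos_forall_mem_bdry_eq_of_isCompact hn0 (hK k) ⟨a.2, haA⟩
  obtain ⟨y, hyL, hya, hyd⟩ := exists_mem_bdry_ne_dist_lt hn a.2 (lt_min hr hε)
  obtain ⟨z, hzK, hzy⟩ := hrF <|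
    show (⟨y, hyL⟩ : Bdry n) ∈ ball a r from hyd.trans_le (min_le_left _ _)
  change (z : E) = y at hzy
  subst hzy
  exact hya (hKa z hzK hyL (hyd.trans_le (min_le_right _ _)))

end Niemytzki

theorem tauLM_secondCountable_not_sigmaCompact_general (n : ℕ) (hn : 2 ≤ n)
    (M : Set (EuclideanSpace ℝ (Fin n))) (hMc : M.Countable)
    (hMd : Dense (Subtype.val ⁻¹' M : Set (Bdry n))) :
    @SecondCountableTopology (HalfSpace n) (tau n (Bdry n \ M)) ∧
    ¬ @SigmaCompactSpace (HalfSpace n) (tau n (Bdry n \ M)) :=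
  ⟨secondCountableTopology_tau (by omega)
      (hMc.mono (sdiff_sdiff_right_self _ _ ▸ inter_subset_right)),
    not_sigmaCompactSpace_tau hn (hMd.mono fun _ hy hyA => hyA.2 hy)⟩

/-- For every `n ≥ 2`, if `M` is a countable subset of `L` dense in the Euclidean topology of
`L`, then `(X, τ(L \ M))` is second countable but not σ-compact. -/
theorem tauLM_secondCountable_not_sigmaCompact (n : ℕ) (hn : 2 ≤ n)
    (M : Set (EuclideanSpace ℝ (Fin n))) (hM : M ⊆ Bdry n) (hMc : M.Countable)
    (hMd : Dense (Subtype.val ⁻¹' M : Set (Bdry n))) :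
    @SecondCountableTopology (HalfSpace n) (tau n (Bdry n \ M)) ∧
    ¬ @SigmaCompactSpace (HalfSpace n) (tau n (Bdry n \ M)) :=
  tauLM_secondCountable_not_sigmaCompact_general n hn M hMc hMd
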